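/- (Failure of the classic Perceptron under strategic manipulation.) There exist d = 2, α = 1/2, a label sequence s : ℕ → ℝ with s t ∈ {1, −1}, true points z : ℕ → E (E = EuclideanSpace ℝ (Fin 2)) given by z 0 = (−1, 0) with s 0 = −1 and, for all k ≥ 0, z (2k+1) = (0, −1) with label 1 and z (2k+2) = (−1/2, −1) with label −1, and a sequence x : ℕ → E such that: (i) the z t are linearly separable with margin, i.e. there is w° ∈ E with s t · ⟪z t, w°⟫ ≥ 1 for all t; (ii) defining the classic Perceptron run by w 0 = 0, pos t ↔ ⟪x t, w t⟫ ≥ 0, mistake t ↔ ((pos t ∧ s t = −1) ∨ (¬ pos t ∧ s t = 1)), and w (t+1) = w t + s t • (x t) if mistake t else w (t+1) = w t, each x t is a best response of the agent with true point z t and budget α to the classifier w t with threshold 0, i.e. x t maximizes y ↦ (1 if ⟪y, w t⟫ ≥ 0 else 0) − ‖y − z t‖/α over E; (iii) the set {t | mistake t} is infinite; and (iv) there exists w• ∈ E (namely w• = (1, 1/2)) that is a perfect classifier under manipulation: for every t, every best response x of the agent with true point z t and budget α to the classifier w• with threshold 0 satisfies ⟪x, w•⟫ ≥ 0 if and only if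 s t = 1. -/

import Mathlib

/-!
With `w₀ = 0` every report is classified positive, so the first negative point `(-1, 0)` costs a
mistake and moves the Perceptron to `w = (1, 0)`, on whose boundary the next, positive, agent at
`(0, -1)` already lies. From then on the agents alternate: a negative agent at `(-1/2, -1)` lies
exactly at distance `α = 1/2` from the positive half-plane of `(1, 0)`, so moving to `(0, -1)` is
a best response and is misclassified; the update gives `w = (1, 1)`, whose half-plane is at
distance `1/√2 > α` from the positive agent at `(0, -1)`, who therefore stays, is misclassified,
and the update returns `w` to `(1, 0)`. Against `w• = (1, 1/2)` instead, the negative agents are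
at distance `2/√5 > α` and cannot reach the positive side, while the positive agent is at
distance `1/√5 < α` and always does.
-/

open RealInnerProductSpace

section BestResponse

variable {F : Type*} [NormedAddCommGroup F] [InnerProductSpace ℝ F] {α : ℝ} {w z x y : F}

noncomputable def strategicUtility (α : ℝ) (w z y : F) : ℝ :=
  (if ⟪y, w⟫ ≥ 0 then 1 else 0) - ‖y - z‖ / α

def IsBestResponse (α : ℝ) (w z x : F) : Prop :=
  ∀ y, strategicUtility α w z y ≤ strategicUtility α w z x

lemma strategicUtility_of_inner_nonneg (α : ℝ) (z : F) (hy : 0 ≤ ⟪y, w⟫) :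
    strategicUtility α w z y = 1 - ‖y - z‖ / α := by
  simp [strategicUtility, hy]

lemma strategicUtility_of_inner_neg (α : ℝ) (z : F) (hy : ⟪y, w⟫ < 0) :
    strategicUtility α w z y = -(‖y - z‖ / α) := by
  simp [strategicUtility, hy.not_ge]

lemma strategicUtility_le_one (hα : 0 ≤ α) (w z y : F) : strategicUtility α w z y ≤ 1 := by
  unfold strategicUtility
  have := div_nonneg (norm_nonneg (y - z)) hα
  split_ifs <;> linarith

lemma strategicUtility_nonpos_of_inner_neg (hα : 0 ≤ α) (z : F) (hy : ⟪y, w⟫ < 0) :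
    strategicUtility α w z y ≤ 0 := by
  rw [strategicUtility_of_inner_neg α z hy, neg_nonpos]
  positivity

lemma strategicUtility_self_of_inner_neg (α : ℝ) (hz : ⟪z, w⟫ < 0) :
    strategicUtility α w z z = 0 := by
  rw [strategicUtility_of_inner_neg α z hz, sub_self, norm_zero, zero_div, neg_zero]

lemma neg_inner_le_norm_sub_mul_norm (z : F) (hy : 0 ≤ ⟪y, w⟫) : -⟪z, w⟫ ≤ ‖y - z‖ * ‖w‖ := by
  have := real_inner_le_norm (y - z) w
  rw [inner_sub_left] at this
  linarith

lemma isBestResponse_self_of_inner_nonneg (hα : 0 ≤ α) (hz : 0 ≤ ⟪z, w⟫) :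
    IsBestResponse α w z z := by
  intro y
  rw [strategicUtility_of_inner_nonneg α z hz, sub_self, norm_zero, zero_div, sub_zero]
  exact strategicUtility_le_one hα w z y

lemma isBestResponse_self_of_mul_norm_le (hα : 0 < α) (h : α * ‖w‖ ≤ -⟪z, w⟫) :
    IsBestResponse α w z z := by
  rcases le_or_gt 0 ⟪z, w⟫ with hz | hz
  · exact isBestResponse_self_of_inner_nonneg hα.le hz
  intro y
  rw [strategicUtility_self_of_inner_neg α hz]
  rcases le_or_gt 0 ⟪y, w⟫ with hy | hy
  · have hw : 0 < ‖w‖ := norm_pos_iff.2 fun hw => by simp [hw] at hz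
    have hαy : α ≤ ‖y - z‖ :=
      le_of_mul_le_mul_right (h.trans (neg_inner_le_norm_sub_mul_norm z hy)) hw
    rw [strategicUtility_of_inner_nonneg α z hy, sub_nonpos, one_le_div hα]
    exact hαy
  · exact strategicUtility_nonpos_of_inner_neg hα.le z hy

/-- `hxz` says that `x` is a point of the positive half-space nearest to `z`. -/
lemma isBestResponse_of_norm_sub_mul_norm_le (hα : 0 < α) (hw : w ≠ 0) (hx : 0 ≤ ⟪x, w⟫)
    (hxz : ‖x - z‖ * ‖w‖ ≤ -⟪z, w⟫) (hxα : ‖x - z‖ ≤ α) : IsBestResponse α w z x := by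
  intro y
  rw [strategicUtility_of_inner_nonneg α z hx]
  rcases le_or_gt 0 ⟪y, w⟫ with hy | hy
  · have hxy : ‖x - z‖ ≤ ‖y - z‖ :=
      le_of_mul_le_mul_right (hxz.trans (neg_inner_le_norm_sub_mul_norm z hy)) (norm_pos_iff.2 hw)
    rw [strategicUtility_of_inner_nonneg α z hy]
    gcongr
  · calc strategicUtility α w z y ≤ 0 := strategicUtility_nonpos_of_inner_neg hα.le z hy
      _ ≤ 1 - ‖x - z‖ / α := by rwa [sub_nonneg, div_le_one hα]

lemma not_inner_nonneg_of_isBestResponse (hα : 0 < α) (h : α * ‖w‖ < -⟪z, w⟫)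
    (hx : IsBestResponse α w z x) : ¬ 0 ≤ ⟪x, w⟫ := by
  intro hxw
  have hz : ⟪z, w⟫ < 0 := by linarith [mul_nonneg hα.le (norm_nonneg w)]
  have hαx : α < ‖x - z‖ :=
    lt_of_mul_lt_mul_right (h.trans_le (neg_inner_le_norm_sub_mul_norm z hxw)) (norm_nonneg w)
  have hzx := hx z
  rw [strategicUtility_self_of_inner_neg α hz, strategicUtility_of_inner_nonneg α z hxw,
    sub_nonneg, div_le_one hα] at hzx
  linarith

lemma inner_nonneg_of_isBestResponse (hα : 0 < α) (hy : 0 ≤ ⟪y, w⟫) (hyz : ‖y - z‖ < α)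
    (hx : IsBestResponse α w z x) : 0 ≤ ⟪x, w⟫ := by
  by_contra hxw
  have hyx := hx y
  rw [strategicUtility_of_inner_nonneg α z hy,
    strategicUtility_of_inner_neg α z (not_le.1 hxw)] at hyx
  have hy' : ‖y - z‖ / α < 1 := (div_lt_one hα).2 hyz
  have hx' : 0 ≤ ‖x - z‖ / α := div_nonneg (norm_nonneg _) hα.le
  linarith

end BestResponse

@[elab_as_elim]
lemma Nat.cases_zero_one_even_odd {motive : ℕ → Prop} (zero : motive 0) (one : motive 1)
    (even : ∀ k, motive (2 * k + 2)) (odd : ∀ k, motive (2 * k + 3)) (t : ℕ) : motive t := by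
  obtain ⟨k, rfl | rfl⟩ := Nat.even_or_odd' t
  · cases k with
    | zero => exact zero
    | succ k => exact even k
  · cases k with
    | zero => exact one
    | succ k => exact odd k

section Plane

local notation "E2" => EuclideanSpace ℝ (Fin 2)

@[simp]
lemma inner_vec₂ (a b c d : ℝ) : ⟪!₂[a, b], !₂[c, d]⟫ = a * c + b * d := by
  simp [EuclideanSpace.inner_toLp_toLp, Fin.sum_univ_two, dotProduct]
  ring

@[simp]
lemma norm_vec₂ (a b : ℝ) : ‖!₂[a, b]‖ = √(a ^ 2 + b ^ 2) := by
  simp [EuclideanSpace.norm_eq, Fin.sum_univ_two]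

@[simp]
lemma vec₂_sub_vec₂ (a b c d : ℝ) : !₂[a, b] - !₂[c, d] = !₂[a - c, b - d] := by
  simp [← WithLp.toLp_sub]

@[simp]
lemma vec₂_add_vec₂ (a b c d : ℝ) : !₂[a, b] + !₂[c, d] = !₂[a + c, b + d] := by
  simp [← WithLp.toLp_add]

@[simp]
lemma neg_vec₂ (a b : ℝ) : -!₂[a, b] = !₂[-a, -b] := by
  simp [← WithLp.toLp_neg]

end Plane

namespace PerceptronCounterexample

local notation "E2" => EuclideanSpace ℝ (Fin 2)

noncomputable def label (t : ℕ) : ℝ := if Odd t then 1 else -1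

noncomputable def truePoint : ℕ → E2
  | 0 => !₂[-1, 0]
  | t + 1 => if Even t then !₂[0, -1] else !₂[-1 / 2, -1]

noncomputable def report : ℕ → E2
  | 0 => !₂[-1, 0]
  | _ + 1 => !₂[0, -1]

noncomputable def weight : ℕ → E2
  | 0 => 0
  | 1 => !₂[1, 0]
  | t + 2 => if Even t then !₂[1, 0] else !₂[1, 1]

def IsMistake (t : ℕ) : Prop :=
  (⟪report t, weight t⟫ ≥ 0 ∧ label t = -1) ∨ (¬ ⟪report t, weight t⟫ ≥ 0 ∧ label t = 1)

lemma label_eq_one_or_eq_neg_one (t : ℕ) : label t = 1 ∨ label t = -1 := by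
  unfold label
  split_ifs <;> simp

@[simp] lemma label_zero : label 0 = -1 := by simp [label]
@[simp] lemma label_one : label 1 = 1 := by simp [label]
@[simp] lemma label_two_mul_add_one (k : ℕ) : label (2 * k + 1) = 1 := by simp [label]
@[simp] lemma label_two_mul_add_two (k : ℕ) : label (2 * k + 2) = -1 := by
  simp [label, parity_simps]
@[simp] lemma label_two_mul_add_three (k : ℕ) : label (2 * k + 3) = 1 := by
  simp [label, parity_simps]

@[simp] lemma truePoint_zero : truePoint 0 = !₂[-1, 0] := rfl
@[simp] lemma truePoint_one : truePoint 1 = !₂[0, -1] := rfl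
@[simp] lemma truePoint_two_mul_add_one (k : ℕ) : truePoint (2 * k + 1) = !₂[0, -1] := by
  simp [truePoint]
@[simp] lemma truePoint_two_mul_add_two (k : ℕ) : truePoint (2 * k + 2) = !₂[-1 / 2, -1] := by
  simp [truePoint, parity_simps]
@[simp] lemma truePoint_two_mul_add_three (k : ℕ) : truePoint (2 * k + 3) = !₂[0, -1] := by
  simp [truePoint, parity_simps]

@[simp] lemma report_zero : report 0 = !₂[-1, 0] := rfl
@[simp] lemma report_succ (t : ℕ) : report (t + 1) = !₂[0, -1] := rfl

@[simp] lemma weight_zero : weight 0 = 0 := rfl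
@[simp] lemma weight_one : weight 1 = !₂[1, 0] := rfl
@[simp] lemma weight_two_mul_add_two (k : ℕ) : weight (2 * k + 2) = !₂[1, 0] := by
  simp [weight]
@[simp] lemma weight_two_mul_add_three (k : ℕ) : weight (2 * k + 3) = !₂[1, 1] := by
  simp [weight, parity_simps]
@[simp] lemma weight_two_mul_add_four (k : ℕ) : weight (2 * k + 4) = !₂[1, 0] := by
  simp [weight, parity_simps]

lemma isMistake_zero : IsMistake 0 := by simp [IsMistake]
lemma not_isMistake_one : ¬ IsMistake 1 := by norm_num [IsMistake]
lemma isMistake_two_mul_add_two (k : ℕ) : IsMistake (2 * k + 2) := by simp [IsMistake]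
lemma isMistake_two_mul_add_three (k : ℕ) : IsMistake (2 * k + 3) := by norm_num [IsMistake]

open scoped Classical in
lemma weight_succ (t : ℕ) :
    weight (t + 1) = if IsMistake t then weight t + label t • report t else weight t := by
  cases t using Nat.cases_zero_one_even_odd with
  | zero => simp [if_pos isMistake_zero]
  | one => simp [if_neg not_isMistake_one, weight]
  | even k => simp [if_pos (isMistake_two_mul_add_two k)]
  | odd k => simp [if_pos (isMistake_two_mul_add_three k)]

lemma isMistake_infinite : {t | IsMistake t}.Infinite :=
  Set.infinite_of_forall_exists_gt fun t => ⟨2 * t + 2, isMistake_two_mul_add_two t, by omega⟩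

lemma one_le_label_mul_inner_truePoint (t : ℕ) : 1 ≤ label t * ⟪truePoint t, !₂[4, -1]⟫ := by
  cases t using Nat.cases_zero_one_even_odd <;> norm_num

lemma isBestResponse_report (t : ℕ) :
    IsBestResponse (1 / 2) (weight t) (truePoint t) (report t) := by
  cases t using Nat.cases_zero_one_even_odd with
  | zero => exact isBestResponse_self_of_inner_nonneg (by norm_num) (by simp)
  | one => exact isBestResponse_self_of_inner_nonneg (by norm_num) (by simp)
  | even k =>
    refine isBestResponse_of_norm_sub_mul_norm_le (by norm_num) (by simp) (by simp) ?_ ?_ <;>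
      norm_num
  | odd k =>
    have hsqrt : √2 ≤ 2 := (Real.sqrt_le_left zero_le_two).2 (by norm_num)
    simp only [weight_two_mul_add_three, truePoint_two_mul_add_three, report_succ]
    exact isBestResponse_self_of_mul_norm_le (by norm_num) (by norm_num; linarith)

lemma inner_nonneg_iff_label_eq_one {t : ℕ} {x : E2}
    (hx : IsBestResponse (1 / 2) !₂[1, 1 / 2] (truePoint t) x) :
    0 ≤ ⟪x, !₂[1, 1 / 2]⟫ ↔ label t = 1 := by
  have hfar : 1 / 2 * ‖(!₂[1, 1 / 2] : E2)‖ < 1 := by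
    rw [norm_vec₂, ← lt_div_iff₀' one_half_pos, Real.sqrt_lt' (by norm_num)]
    norm_num
  have hnear : ‖(!₂[2 / 5, -4 / 5] : E2) - !₂[0, -1]‖ < 1 / 2 := by
    rw [vec₂_sub_vec₂, norm_vec₂, Real.sqrt_lt' one_half_pos]
    norm_num
  have hreach : 0 ≤ ⟪(!₂[2 / 5, -4 / 5] : E2), !₂[1, 1 / 2]⟫ := by norm_num
  cases t using Nat.cases_zero_one_even_odd with
  | zero =>
    exact iff_of_false
      (not_inner_nonneg_of_isBestResponse one_half_pos (hfar.trans_eq (by norm_num)) hx)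
      (by norm_num)
  | one => exact iff_of_true (inner_nonneg_of_isBestResponse one_half_pos hreach hnear hx) label_one
  | even k =>
    simp only [truePoint_two_mul_add_two] at hx
    exact iff_of_false
      (not_inner_nonneg_of_isBestResponse one_half_pos (hfar.trans_eq (by norm_num)) hx)
      (by norm_num)
  | odd k =>
    simp only [truePoint_two_mul_add_three] at hx
    exact iff_of_true (inner_nonneg_of_isBestResponse one_half_pos hreach hnear hx)
      (label_two_mul_add_three k)

end PerceptronCounterexample

open PerceptronCounterexample

open scoped Classical in
theorem classic_perceptron_fails_under_strategic_manipulation :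
    ∃ (s : ℕ → ℝ) (z x : ℕ → EuclideanSpace ℝ (Fin 2))
      (w : ℕ → EuclideanSpace ℝ (Fin 2)) (pos mistake : ℕ → Prop),
      (∀ t, s t = 1 ∨ s t = -1) ∧
      s 0 = -1 ∧ z 0 = ![(-1 : ℝ), 0] ∧
      (∀ k : ℕ, s (2 * k + 1) = 1 ∧ z (2 * k + 1) = ![(0 : ℝ), -1]) ∧
      (∀ k : ℕ, s (2 * k + 2) = -1 ∧ z (2 * k + 2) = ![(-1 / 2 : ℝ), -1]) ∧
      -- (i) the true points are linearly separable with margin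
      (∃ wsep : EuclideanSpace ℝ (Fin 2), ∀ t, s t * ⟪z t, wsep⟫ ≥ 1) ∧
      -- (ii) classic Perceptron run on best responses with budget α = 1/2
      w 0 = 0 ∧
      (∀ t, pos t ↔ ⟪x t, w t⟫ ≥ 0) ∧
      (∀ t, mistake t ↔ ((pos t ∧ s t = -1) ∨ (¬ pos t ∧ s t = 1))) ∧
      (∀ t, w (t + 1) = if mistake t then w t + s t • x t else w t) ∧
      (∀ t, ∀ y : EuclideanSpace ℝ (Fin 2),
        ((if ⟪y, w t⟫ ≥ 0 then (1 : ℝ) else 0) - ‖y - z t‖ / (1 / 2)) ≤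
          ((if ⟪x t, w t⟫ ≥ 0 then (1 : ℝ) else 0) - ‖x t - z t‖ / (1 / 2))) ∧
      -- (iii) infinitely many mistakes
      {t | mistake t}.Infinite ∧
      -- (iv) a perfect classifier under manipulation exists
      (∃ wperf : EuclideanSpace ℝ (Fin 2), wperf = ![(1 : ℝ), 1 / 2] ∧
        ∀ t, ∀ xb : EuclideanSpace ℝ (Fin 2),
          (∀ y : EuclideanSpace ℝ (Fin 2),
            ((if ⟪y, wperf⟫ ≥ 0 then (1 : ℝ) else 0) - ‖y - z t‖ / (1 / 2)) ≤
              ((if ⟪xb, wperf⟫ ≥ 0 then (1 : ℝ) else 0) - ‖xb - z t‖ / (1 / 2))) →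
          (⟪xb, wperf⟫ ≥ 0 ↔ s t = 1)) :=
  ⟨label, truePoint, report, weight, fun t => ⟪report t, weight t⟫ ≥ 0, IsMistake,
    label_eq_one_or_eq_neg_one, label_zero, rfl,
    fun k => ⟨label_two_mul_add_one k, by rw [truePoint_two_mul_add_one]⟩,
    fun k => ⟨label_two_mul_add_two k, by rw [truePoint_two_mul_add_two]⟩,
    ⟨!₂[4, -1], one_le_label_mul_inner_truePoint⟩,
    rfl, fun _ => Iff.rfl, fun _ => Iff.rfl, weight_succ, isBestResponse_report,
    isMistake_infinite,
    ⟨!₂[1, 1 / 2], rfl, fun _ _ hx => inner_nonneg_iff_label_eq_one hx⟩⟩
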